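/- Let Γ_k : ℝⁿ → Matrix (Fin n) (Fin n) ℝ (k = 1,…,n) be smooth and A : ℝⁿ → GL(n,ℝ) smooth with Γ_k·A + ∂_k A = 0 at a point p for all k. If (Γ_k)^i_j = (Γ_j)^i_k at p (symmetry of the connection coefficients), then (E_{j'}(A^k_{i'}))(p) = (E_{i'}(A^k_{j'}))(p) for all k, i', j', where E_{i'} = A^m_{i'} ∂_m. -/
import Mathlib


/-- Partial derivative `∂_k f` of a real-valued function on `ℝⁿ` at `p`. -/
noncomputable def pderiv' {n : ℕ} (f : (Fin n → ℝ) → ℝ) (k : Fin n) (p : Fin n → ℝ) : ℝ :=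
  fderiv ℝ f p (Pi.single k 1)

/-- computation in Proposition 3. If the smooth invertible matrix
function `A` satisfies `Γ_k·A + ∂_k A = 0` at `p` for all `k` and the connection
coefficients are symmetric at `p` (`(Γ_k)^i_j = (Γ_j)^i_k`), then for the frame
`E_{i'} = A^m_{i'} ∂_m` one has `E_{j'}(A^k_{i'}) = E_{i'}(A^k_{j'})` at `p`. -/
theorem frame_derivative_symmetric {n : ℕ}
    (Γ : Fin n → (Fin n → ℝ) → Matrix (Fin n) (Fin n) ℝ)
    (hΓ : ∀ k i j, ContDiff ℝ (⊤ : ℕ∞) fun p => Γ k p i j)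
    (A : (Fin n → ℝ) → Matrix (Fin n) (Fin n) ℝ)
    (hA : ∀ i j, ContDiff ℝ (⊤ : ℕ∞) fun p => A p i j)
    (hAinv : ∀ p, IsUnit (A p))
    (p : Fin n → ℝ)
    (hpar : ∀ k, Γ k p * A p + (Matrix.of fun i j => pderiv' (fun q => A q i j) k p) = 0)
    (hsymm : ∀ i j k, Γ k p i j = Γ j p i k) :
    ∀ (k i' j' : Fin n),
      (∑ m, A p m j' * pderiv' (fun q => A q k i') m p) =
      (∑ m, A p m i' * pderiv' (fun q => A q k j') m p) := by
  intro k i' j'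
  have hd : ∀ m i, pderiv' (fun q => A q k i) m p = -∑ l, Γ m p k l * A p l i := by
    intro m i
    have h := congrFun (congrFun (hpar m) k) i
    simp only [Matrix.add_apply, Matrix.mul_apply, Matrix.of_apply, Matrix.zero_apply] at h
    linarith
  have key : ∀ i j : Fin n,
      (∑ m, A p m j * pderiv' (fun q => A q k i) m p) =
       -∑ m, ∑ l, Γ m p k l * A p m j * A p l i := by
    intro i j
    simp only [hd, mul_neg, Finset.mul_sum, Finset.sum_neg_distrib]
    congr 1
    apply Finset.sum_congr rfl; intro m _
    apply Finset.sum_congr rfl; intro l _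
    ring
  rw [key i' j', key j' i']
  congr 1
  rw [Finset.sum_comm]
  apply Finset.sum_congr rfl; intro m _
  apply Finset.sum_congr rfl; intro l _
  rw [hsymm k m l]; ring
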